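/- Let g₁, g₂ : ℝ≥0 → ℝ≥0 be continuous, let M > 0 satisfy g₁(z) ≤ M g₂(z) for all z ≥ 0, and let w : [0,T] → ℝ≥0 be continuous. If k : [0,T] → ℝ solves k' = g₁(w(t)) - g₂(w(t)) k with k(0) = k₀ ≥ 0, then 0 ≤ k(t) ≤ M + k₀ for all t ∈ [0,T]. -/

import Mathlib

open Set

/-- ODE bound: if `k' = g₁(w t) - g₂(w t) k` with `g₁ ≤ M g₂` on nonnegative
arguments and nonnegative initial data, then `0 ≤ k t ≤ M + k 0` on `[0, T]`. -/
theorem ode_sup_bound (T : ℝ) (hT : 0 < T)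
    (g₁ g₂ : ℝ → ℝ) (hg₁c : Continuous g₁) (hg₂c : Continuous g₂)
    (hg₁ : ∀ z, 0 ≤ z → 0 ≤ g₁ z) (hg₂ : ∀ z, 0 ≤ z → 0 ≤ g₂ z)
    (M : ℝ) (hM : 0 < M) (hdom : ∀ z, 0 ≤ z → g₁ z ≤ M * g₂ z)
    (w : ℝ → ℝ) (hwc : Continuous w) (hw : ∀ t ∈ Icc 0 T, 0 ≤ w t)
    (k : ℝ → ℝ) (k₀ : ℝ) (hk₀ : 0 ≤ k₀) (hkinit : k 0 = k₀)
    (hk : ∀ t ∈ Icc 0 T, HasDerivAt k (g₁ (w t) - g₂ (w t) * k t) t) :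
    ∀ t ∈ Icc 0 T, 0 ≤ k t ∧ k t ≤ M + k₀ := by
  set G : ℝ → ℝ := fun t => ∫ s in (0:ℝ)..t, g₂ (w s) with hGdef
  have hg₂w : Continuous fun s => g₂ (w s) := hg₂c.comp hwc
  have hG : ∀ t, HasDerivAt G (g₂ (w t)) t := fun t =>
    (hg₂w.integral_hasStrictDerivAt 0 t).hasDerivAt
  have hG0 : G 0 = 0 := by simp [hGdef]
  have hGnonneg : ∀ t ∈ Icc (0:ℝ) T, 0 ≤ G t := by
    intro t ht
    apply intervalIntegral.integral_nonneg ht.1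
    intro s hs
    exact hg₂ (w s) (hw s ⟨hs.1, le_trans hs.2 ht.2⟩)
  have hE : ∀ t, HasDerivAt (fun u => Real.exp (G u)) (Real.exp (G t) * g₂ (w t)) t :=
    fun t => (hG t).exp
  have hEpos : ∀ t, 0 < Real.exp (G t) := fun t => Real.exp_pos _
  -- lower bound: H = k * exp G is monotone
  set H : ℝ → ℝ := fun t => k t * Real.exp (G t) with hHdef
  have hH : ∀ t ∈ Icc 0 T, HasDerivAt H (g₁ (w t) * Real.exp (G t)) t := by
    intro t ht
    have : HasDerivAt (fun y => k y * Real.exp (G y)) _ t := (hk t ht).mul (hE t)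
    convert this using 1
    ring
  have hHmono : MonotoneOn H (Icc 0 T) := by
    apply monotoneOn_of_deriv_nonneg (convex_Icc 0 T)
    · exact fun t ht => ((hH t ht).continuousAt).continuousWithinAt
    · intro t ht
      rw [interior_Icc] at ht
      exact ((hH t (Ioo_subset_Icc_self ht)).differentiableAt).differentiableWithinAt
    · intro t ht
      rw [interior_Icc] at ht
      have ht' := Ioo_subset_Icc_self ht
      rw [(hH t ht').deriv]
      exact mul_nonneg (hg₁ _ (hw t ht')) (hEpos t).le
  -- upper bound: F = (k - M) * exp G is antitone
  set F : ℝ → ℝ := fun t => (k t - M) * Real.exp (G t) with hFdef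
  have hF : ∀ t ∈ Icc 0 T,
      HasDerivAt F ((g₁ (w t) - M * g₂ (w t)) * Real.exp (G t)) t := by
    intro t ht
    have : HasDerivAt (fun y => (k y - M) * Real.exp (G y)) _ t := ((hk t ht).sub_const M).mul (hE t)
    convert this using 1
    ring
  have hFanti : AntitoneOn F (Icc 0 T) := by
    apply antitoneOn_of_deriv_nonpos (convex_Icc 0 T)
    · exact fun t ht => ((hF t ht).continuousAt).continuousWithinAt
    · intro t ht
      rw [interior_Icc] at ht
      exact ((hF t (Ioo_subset_Icc_self ht)).differentiableAt).differentiableWithinAt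
    · intro t ht
      rw [interior_Icc] at ht
      have ht' := Ioo_subset_Icc_self ht
      rw [(hF t ht').deriv]
      apply mul_nonpos_of_nonpos_of_nonneg _ (hEpos t).le
      have := hdom (w t) (hw t ht')
      linarith
  intro t ht
  have h0T : (0:ℝ) ∈ Icc (0:ℝ) T := ⟨le_refl _, hT.le⟩
  constructor
  · -- 0 ≤ k t
    have := hHmono h0T ht ht.1
    rw [hHdef] at this
    simp only [hG0, Real.exp_zero, mul_one, hkinit] at this
    have hkE : 0 ≤ k t * Real.exp (G t) := le_trans hk₀ this
    exact nonneg_of_mul_nonneg_right (by linarith [hkE] : 0 ≤ Real.exp (G t) * k t) (hEpos t)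
  · -- k t ≤ M + k₀
    have hFt := hFanti h0T ht ht.1
    rw [hFdef] at hFt
    simp only [hG0, Real.exp_zero, mul_one, hkinit] at hFt
    by_cases hkM : k t ≤ M
    · linarith
    · push_neg at hkM
      have hexp1 : 1 ≤ Real.exp (G t) := Real.one_le_exp (hGnonneg t ht)
      have : k t - M ≤ (k t - M) * Real.exp (G t) := by
        nlinarith
      linarith
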